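/- arXiv:2111.06926 — 3 statements merged into one kernel-verified Lean document; each statement's English description precedes it below -/
import Mathlib

section
/- Let M be a commutative monoid, written additively, equipped with a partial order, and assume: (i) for all x, z ∈ M, if x + z ≤ z then x ≤ 0 (positive cancellation); (ii) for all x, y ∈ M, if 0 ≤ y and x ≤ y then 0 ≤ x + y (positive convexity); (iii) every additively invertible element of M is 0, i.e. for all x ∈ M, if there exists y ∈ M with x + y = 0 then x = 0. Then for all x, y ∈ M: if there exists z ∈ M with x + y + z = z, then x = 0 and y = 0. Equivalently, in the Grothendieck group of M, the image of M intersects the negative of the image of M only in 0, so the Grothendieck group of M, with positive cone the image of M, is a partially ordered abelian group. -/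
/-- Let `M` be a partially ordered commutative monoid satisfying
(i) positive cancellation: `x + z ≤ z → x ≤ 0`;
(ii) positive convexity: `0 ≤ y → x ≤ y → 0 ≤ x + y`;
(iii) the only additively invertible element is `0`.
Then `x + y + z = z` for some `z` forces `x = 0` and `y = 0`
(so the Grothendieck group of `M`, with positive cone the image of `M`,
is a partially ordered abelian group). -/
theorem stmt10 (M : Type*) [AddCommMonoid M] [PartialOrder M]
    (hcancel : ∀ x z : M, x + z ≤ z → x ≤ 0)
    (hconvex : ∀ x y : M, 0 ≤ y → x ≤ y → 0 ≤ x + y)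
    (hinv : ∀ x : M, (∃ y : M, x + y = 0) → x = 0) :
    ∀ x y : M, (∃ z : M, x + y + z = z) → x = 0 ∧ y = 0 := by
  intro x y ⟨z, hz⟩
  have h1 : x + y ≤ 0 := hcancel _ z hz.le
  have h2 : 0 ≤ x + y := by
    have := hconvex (x + y) 0 le_rfl h1
    simpa using this
  have hxy : x + y = 0 := le_antisymm h1 h2
  have hx : x = 0 := hinv x ⟨y, hxy⟩
  refine ⟨hx, hinv y ⟨x, ?_⟩⟩
  rw [add_comm]; exact hxy
end

section
/- Let S be a commutative monoid, written additively, equipped with a partial order. For x, y ∈ S, say that x is way-below y (written x ≪ y) if for every monotone (nondecreasing) sequence (zₙ)_{n∈ℕ} in S and every s ∈ S such that s is a least upper bound of {zₙ : n ∈ ℕ} and y ≤ s, there exists n with x ≤ zₙ. Assume S has positive weak cancellation (PWC): for all x, z ∈ S, x + z ≪ z implies x ≪ 0. Then S has positive cancellation of compact elements (PCC): for all x, z ∈ S with z ≪ z, x + z ≤ z implies x ≤ 0. -/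
/-- `x` is way-below `y` (written `x ≪ y`): for every monotone sequence `(zₙ)`
having a least upper bound `s` with `y ≤ s`, there exists `n` with `x ≤ zₙ`. -/
def WayBelow {S : Type*} [PartialOrder S] (x y : S) : Prop :=
  ∀ z : ℕ → S, Monotone z → ∀ s : S, IsLUB (Set.range z) s → y ≤ s → ∃ n, x ≤ z n

/-- In a partially ordered commutative monoid, positive weak cancellation (PWC)
— `x + z ≪ z` implies `x ≪ 0` — implies positive cancellation of compact
elements (PCC): if `z` is compact (`z ≪ z`) and `x + z ≤ z`, then `x ≤ 0`. -/
theorem stmt11 (S : Type*) [AddCommMonoid S] [PartialOrder S]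
    (hPWC : ∀ x z : S, WayBelow (x + z) z → WayBelow x 0) :
    ∀ x z : S, WayBelow z z → x + z ≤ z → x ≤ 0 := by
  intro x z hz hxz
  have hwb : WayBelow (x + z) z := by
    intro w hw s hs hzs
    obtain ⟨n, hn⟩ := hz w hw s hs hzs
    exact ⟨n, hxz.trans hn⟩
  have h0 : WayBelow x 0 := hPWC x z hwb
  obtain ⟨n, hn⟩ := h0 (fun _ => (0 : S)) monotone_const 0
    (by simp [isLUB_singleton]) le_rfl
  exact hn
end

section
/- Let S = ℕ̄ × ℤ, where ℕ̄ = ℕ ∪ {∞} is the extended natural numbers, with componentwise addition, and define a relation on S by (g, k) ⊑ (h, l) if and only if g ≤ h in ℕ̄ and k = l in ℤ. Then: (a) ⊑ is a partial order on S compatible with addition (x ⊑ y implies x + z ⊑ y + z for all z); (b) S is positively directed: for every x ∈ S there exists p ∈ S with 0 ⊑ x + p; (c) S is positively convex: for all x, y ∈ S, if 0 ⊑ y and x ⊑ y then 0 ⊑ x + y; (d) the set {x ∈ S : there exists y ∈ S with x + y = 0} equals {(g, k) ∈ S : g = 0} = {0} × ℤ, which strictly contains {0}; in particular the positive cone with respect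 to ⊑ is ℕ̄ × {0}. -/
/-!
Everything is checked componentwise. The first coordinate lives in a canonically ordered
monoid, where `0` is the least element and `a + b = 0` forces `a = b = 0`; the second lives in
a group, where every element has a negative. Hence an element is invertible exactly when its
first coordinate is `0`, and `(0, 1)` is such an element other than `0`.
-/

section FstLeSndEq

variable {α β : Type*}

def FstLeSndEq [LE α] (x y : α × β) : Prop := x.1 ≤ y.1 ∧ x.2 = y.2

local infix:50 " ⊑ " => FstLeSndEq

namespace FstLeSndEq

theorem refl [Preorder α] (x : α × β) : x ⊑ x := ⟨le_rfl, rfl⟩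

theorem antisymm [PartialOrder α] {x y : α × β} (hxy : x ⊑ y) (hyx : y ⊑ x) : x = y :=
  Prod.ext (le_antisymm hxy.1 hyx.1) hxy.2

theorem trans [Preorder α] {x y z : α × β} (hxy : x ⊑ y) (hyz : y ⊑ z) : x ⊑ z :=
  ⟨hxy.1.trans hyz.1, hxy.2.trans hyz.2⟩

theorem add_right [Add α] [LE α] [AddRightMono α] [Add β] {x y : α × β} (h : x ⊑ y)
    (z : α × β) : x + z ⊑ y + z :=
  ⟨add_le_add_left h.1 z.1, congrArg (· + z.2) h.2⟩

variable [AddCommMonoid α] [PartialOrder α] [CanonicallyOrderedAdd α]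

theorem zero_left_iff [Zero β] {x : α × β} : 0 ⊑ x ↔ x.2 = 0 :=
  ⟨fun h => h.2.symm, fun h => ⟨zero_le, h.symm⟩⟩

theorem exists_zero_left_add [AddGroup β] (x : α × β) : ∃ p, 0 ⊑ x + p :=
  ⟨(0, -x.2), zero_left_iff.2 (add_neg_cancel x.2)⟩

theorem zero_left_add_of_le [AddZeroClass β] {x y : α × β} (hy : 0 ⊑ y) (hxy : x ⊑ y) :
    0 ⊑ x + y := by
  have hy2 : y.2 = 0 := zero_left_iff.1 hy
  exact zero_left_iff.2 (by rw [Prod.snd_add, hxy.2, hy2, add_zero])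

end FstLeSndEq

end FstLeSndEq

theorem Prod.exists_add_eq_zero_left_iff {α β : Type*} [AddCommMonoid α] [PartialOrder α]
    [CanonicallyOrderedAdd α] [AddGroup β] {x : α × β} : (∃ y, x + y = 0) ↔ x.1 = 0 := by
  constructor
  · rintro ⟨y, hy⟩
    exact (add_eq_zero.1 (congrArg Prod.fst hy)).1
  · intro hx
    exact ⟨(0, -x.2), Prod.ext (by simp [hx]) (add_neg_cancel x.2)⟩

/-- The example `S = ℕ̄ × ℤ` with componentwise addition and the relation
`(g, k) ⊑ (h, l) ↔ g ≤ h ∧ k = l`: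
(a) `⊑` is a partial order compatible with addition;
(b) `S` is positively directed;
(c) `S` is positively convex;
(d) the set of additively invertible elements is `{0} × ℤ`, which strictly
contains `{0}`, and the positive cone of `⊑` is `ℕ̄ × {0}`. -/
theorem stmt12 (r : ℕ∞ × ℤ → ℕ∞ × ℤ → Prop)
    (hr : ∀ x y : ℕ∞ × ℤ, r x y ↔ (x.1 ≤ y.1 ∧ x.2 = y.2)) :
    -- (a) partial order, compatible with addition
    (∀ x, r x x) ∧
    (∀ x y, r x y → r y x → x = y) ∧
    (∀ x y z, r x y → r y z → r x z) ∧
    (∀ x y z, r x y → r (x + z) (y + z)) ∧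
    -- (b) positively directed
    (∀ x, ∃ p, r 0 (x + p)) ∧
    -- (c) positively convex
    (∀ x y, r 0 y → r x y → r 0 (x + y)) ∧
    -- (d) invertible elements form {0} × ℤ, strictly larger than {0};
    --     the positive cone is ℕ̄ × {0}
    ({x : ℕ∞ × ℤ | ∃ y, x + y = 0} = {x : ℕ∞ × ℤ | x.1 = 0}) ∧
    (({0} : Set (ℕ∞ × ℤ)) ⊂ {x : ℕ∞ × ℤ | ∃ y, x + y = 0}) ∧
    ({x : ℕ∞ × ℤ | r 0 x} = {x : ℕ∞ × ℤ | x.2 = 0}) := by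
  obtain rfl : r = FstLeSndEq := funext₂ fun x y => propext (hr x y)
  have units_eq : {x : ℕ∞ × ℤ | ∃ y, x + y = 0} = {x | x.1 = 0} :=
    Set.ext fun _ => Prod.exists_add_eq_zero_left_iff
  refine ⟨FstLeSndEq.refl, fun _ _ => FstLeSndEq.antisymm, fun _ _ _ => FstLeSndEq.trans,
    fun _ _ z h => h.add_right z, FstLeSndEq.exists_zero_left_add,
    fun _ _ => FstLeSndEq.zero_left_add_of_le, units_eq, ?_,
    Set.ext fun _ => FstLeSndEq.zero_left_iff⟩
  rw [units_eq, Set.ssubset_iff_of_subset (by rintro x rfl; rfl)]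
  exact ⟨(0, 1), rfl, by simp⟩
end
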